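/- Let Φ be a linear endomorphism of a real vector space V of dimension 2n given by Φ(X) = ρ·J(X) − α(X)·c, where J : V → V is linear with kernel of dimension n, c ∈ V satisfies J(s) = c for some s ∈ V with J(s) ≠ 0, ρ ≠ 0 is a scalar, and α is a linear functional with α(s) = ρ. Then ker Φ = ker J ⊕ span{s} and dim(ker Φ) = n + 1, hence rank Φ = n − 1. -/
import Mathlib


/-- Kernel and rank of the Jacobi endomorphism `Φ = ρ·J − α ⊗ c` of an
isotropic spray with nonvanishing Ricci scalar: `ker Φ = ker J ⊕ span{s}`,
`dim ker Φ = n + 1` and `rank Φ = n − 1`. -/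
theorem jacobi_endomorphism_kernel
    {V : Type*} [AddCommGroup V] [Module ℝ V] [FiniteDimensional ℝ V]
    {n : ℕ} (hV : Module.finrank ℝ V = 2 * n)
    (J : V →ₗ[ℝ] V) (hJker : Module.finrank ℝ (LinearMap.ker J) = n)
    (s : V) (c : V) (hc : J s = c) (hc0 : J s ≠ 0)
    (ρ : ℝ) (hρ : ρ ≠ 0)
    (α : V →ₗ[ℝ] ℝ) (hαs : α s = ρ)
    (hαker : ∀ x ∈ LinearMap.ker J, α x = 0)
    (Φ : V →ₗ[ℝ] V) (hΦ : Φ = ρ • J - α.smulRight c) :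
    LinearMap.ker Φ = LinearMap.ker J ⊔ Submodule.span ℝ {s} ∧
      LinearMap.ker J ⊓ Submodule.span ℝ {s} = ⊥ ∧
      Module.finrank ℝ (LinearMap.ker Φ) = n + 1 ∧
      Module.finrank ℝ (LinearMap.range Φ) = n - 1 := by
  have hΦx : ∀ x, Φ x = ρ • J x - α x • c := by
    intro x; simp [hΦ]
  have hs0 : s ≠ 0 := fun h => hc0 (by simp [h])
  have hker : LinearMap.ker Φ = LinearMap.ker J ⊔ Submodule.span ℝ {s} := by
    apply le_antisymm
    · intro x hx
      have hx' : ρ • J x - α x • c = 0 := by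
        rw [← hΦx]; exact hx
      have hJy : J (ρ • x - α x • s) = 0 := by
        simp only [map_sub, map_smul, hc]
        exact hx'
      have hx2 : x = ρ⁻¹ • (ρ • x - α x • s) + (ρ⁻¹ * α x) • s := by
        simp [smul_sub, smul_smul, inv_mul_cancel₀ hρ, mul_comm]
      rw [hx2]
      refine Submodule.add_mem _ (Submodule.mem_sup_left ?_) (Submodule.mem_sup_right ?_)
      · exact Submodule.smul_mem _ _ (LinearMap.mem_ker.mpr hJy)
      · exact Submodule.smul_mem _ _ (Submodule.mem_span_singleton_self s)
    · apply sup_le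
      · intro x hx
        have h1 : J x = 0 := hx
        have h2 : α x = 0 := hαker x hx
        simp [LinearMap.mem_ker, hΦx, h1, h2]
      · rw [Submodule.span_le]
        intro x hx
        simp only [Set.mem_singleton_iff] at hx
        subst hx
        simp [SetLike.mem_coe, LinearMap.mem_ker, hΦx, hαs, hc]
  have hdisj : LinearMap.ker J ⊓ Submodule.span ℝ {s} = ⊥ := by
    rw [eq_bot_iff]
    intro x ⟨hx1, hx2⟩
    obtain ⟨t, rfl⟩ := Submodule.mem_span_singleton.mp hx2
    have : J (t • s) = 0 := hx1
    rw [map_smul, smul_eq_zero] at this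
    rcases this with h | h
    · simp [h]
    · exact absurd h hc0
  refine ⟨hker, hdisj, ?_, ?_⟩
  · have hdim : Module.finrank ℝ (LinearMap.ker Φ) = n + 1 := by
      have h1 : Module.finrank ℝ (Submodule.span ℝ ({s} : Set V)) = 1 :=
        finrank_span_singleton hs0
      have := Submodule.finrank_sup_add_finrank_inf_eq (LinearMap.ker J)
        (Submodule.span ℝ {s})
      rw [hdisj] at this
      simp only [finrank_bot, add_zero] at this
      rw [hker, this, hJker, h1]
    exact hdim
  · have hdim : Module.finrank ℝ (LinearMap.ker Φ) = n + 1 := by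
      have h1 : Module.finrank ℝ (Submodule.span ℝ ({s} : Set V)) = 1 :=
        finrank_span_singleton hs0
      have := Submodule.finrank_sup_add_finrank_inf_eq (LinearMap.ker J)
        (Submodule.span ℝ {s})
      rw [hdisj] at this
      simp only [finrank_bot, add_zero] at this
      rw [hker, this, hJker, h1]
    have hrn := LinearMap.finrank_range_add_finrank_ker Φ
    rw [hdim, hV] at hrn
    omega
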